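/- Let c > 0, t > 0, and x ∈ ℝ. Then ∫₀^∞ e^{-cut} |u - x|^{-1/2} du ≤ C·t^{-1/2} for a constant C depending only on c (independent of x and t). -/

import Mathlib

/-!
Split the integral at distance `δ = 1 / (c t)` from the singularity. Near `x` drop the
exponential and integrate `|u - x| ^ (-1/2)` exactly, which gives `4 δ ^ (1/2)`; away from `x`
bound `|u - x| ^ (-1/2)` by `δ ^ (-1/2)` and integrate the exponential, which gives
`δ ^ (-1/2) / (c t) = δ ^ (1/2)`. The same argument works for every exponent in `(-1, 0]`.
-/

open MeasureTheory Real Set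

lemma intervalIntegrable_abs_rpow {r : ℝ} (hr : -1 < r) (a b : ℝ) :
    IntervalIntegrable (fun v : ℝ => |v| ^ r) volume a b := by
  have h_nonneg : ∀ c : ℝ, 0 ≤ c → IntervalIntegrable (fun v : ℝ => |v| ^ r) volume 0 c :=
    fun c hc => (intervalIntegral.intervalIntegrable_rpow' hr).congr fun v hv => by
      rw [uIoc_of_le hc] at hv
      simp only [abs_of_pos hv.1]
  have h : ∀ c : ℝ, IntervalIntegrable (fun v : ℝ => |v| ^ r) volume 0 c := by
    intro c
    rcases le_total 0 c with hc | hc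
    · exact h_nonneg c hc
    · rw [IntervalIntegrable.iff_comp_neg]
      simpa only [abs_neg, neg_zero] using h_nonneg (-c) (neg_nonneg.mpr hc)
  exact (h a).symm.trans (h b)

lemma integral_abs_rpow_symm {r δ : ℝ} (hr : -1 < r) (hδ : 0 ≤ δ) :
    ∫ v in -δ..δ, |v| ^ r = 2 * δ ^ (r + 1) / (r + 1) := by
  have h_right : ∫ v in (0 : ℝ)..δ, |v| ^ r = δ ^ (r + 1) / (r + 1) := by
    rw [intervalIntegral.integral_congr (g := fun v => v ^ r) fun v hv => by
        rw [uIcc_of_le hδ] at hv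
        simp only [abs_of_nonneg hv.1],
      integral_rpow (Or.inl hr), zero_rpow (by linarith), sub_zero]
  have h_left : ∫ v in -δ..0, |v| ^ r = ∫ v in (0 : ℝ)..δ, |v| ^ r := by
    simpa only [abs_neg, neg_zero, neg_neg]
      using intervalIntegral.integral_comp_neg (a := -δ) (b := 0) fun v : ℝ => |v| ^ r
  rw [← intervalIntegral.integral_add_adjacent_intervals (intervalIntegrable_abs_rpow hr _ _)
    (intervalIntegrable_abs_rpow hr _ _), h_left, h_right]
  ring

lemma integral_indicator_abs_sub_rpow {r δ : ℝ} (hr : -1 < r) (hδ : 0 ≤ δ) (x : ℝ) :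
    ∫ u, (Ioo (x - δ) (x + δ)).indicator (fun u => |u - x| ^ r) u = 2 * δ ^ (r + 1) / (r + 1) := by
  rw [integral_indicator measurableSet_Ioo, ← integral_Ioc_eq_integral_Ioo,
    ← intervalIntegral.integral_of_le (by linarith), intervalIntegral.integral_comp_sub_right
      (fun v => |v| ^ r), sub_sub_cancel_left, add_sub_cancel_left, integral_abs_rpow_symm hr hδ]

lemma integrable_indicator_abs_sub_rpow {r δ : ℝ} (hr : -1 < r) (hδ : 0 ≤ δ) (x : ℝ) :
    Integrable ((Ioo (x - δ) (x + δ)).indicator fun u => |u - x| ^ r) := by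
  rw [integrable_indicator_iff measurableSet_Ioo, ← integrableOn_Ioc_iff_integrableOn_Ioo,
    ← intervalIntegrable_iff_integrableOn_Ioc_of_le (by linarith)]
  simpa only [sub_add_cancel, ← sub_eq_add_neg, add_comm, add_sub_cancel_left] using
    (intervalIntegrable_abs_rpow hr (-δ) δ).comp_sub_right x

lemma exp_mul_abs_sub_rpow_le {b r δ x u : ℝ} (hb : 0 ≤ b) (hr : r ≤ 0) (hδ : 0 < δ)
    (hu : 0 ≤ u) :
    exp (-b * u) * |u - x| ^ r ≤
      (Ioo (x - δ) (x + δ)).indicator (fun u => |u - x| ^ r) u + δ ^ r * exp (-b * u) := by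
  by_cases hnear : |u - x| < δ
  · have hmem : u ∈ Ioo (x - δ) (x + δ) := by
      constructor <;> linarith [abs_lt.mp hnear]
    rw [indicator_of_mem hmem]
    have hexp : exp (-b * u) ≤ 1 := exp_le_one_iff.mpr (by nlinarith)
    nlinarith [rpow_nonneg (abs_nonneg (u - x)) r, rpow_nonneg hδ.le r, exp_pos (-b * u)]
  · have hfar : |u - x| ^ r ≤ δ ^ r := rpow_le_rpow_of_nonpos hδ (not_lt.mp hnear) hr
    have hind : 0 ≤ (Ioo (x - δ) (x + δ)).indicator (fun u => |u - x| ^ r) u :=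
      indicator_nonneg (fun v _ => rpow_nonneg (abs_nonneg _) _) u
    nlinarith [exp_pos (-b * u)]

lemma integral_exp_neg_mul_Ioi_zero {b : ℝ} (hb : 0 < b) :
    ∫ u in Ioi (0 : ℝ), exp (-b * u) = b⁻¹ := by
  rw [integral_exp_mul_Ioi (neg_neg_iff_pos.mpr hb), mul_zero, exp_zero, neg_div_neg_eq,
    one_div]

lemma integral_exp_mul_abs_sub_rpow_le_of_split {b r δ : ℝ} (hb : 0 < b) (hr₁ : -1 < r)
    (hr₀ : r ≤ 0) (hδ : 0 < δ) (x : ℝ) :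
    ∫ u in Ioi (0 : ℝ), exp (-b * u) * |u - x| ^ r ≤ 2 * δ ^ (r + 1) / (r + 1) + δ ^ r * b⁻¹ := by
  set near := (Ioo (x - δ) (x + δ)).indicator fun u => |u - x| ^ r
  have h_near : Integrable near := integrable_indicator_abs_sub_rpow hr₁ hδ.le x
  have h_far : IntegrableOn (fun u => δ ^ r * exp (-b * u)) (Ioi 0) :=
    (exp_neg_integrableOn_Ioi 0 hb).const_mul _
  calc ∫ u in Ioi (0 : ℝ), exp (-b * u) * |u - x| ^ r
      ≤ ∫ u in Ioi (0 : ℝ), (near u + δ ^ r * exp (-b * u)) := by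
        refine integral_mono_of_nonneg (ae_of_all _ fun u => by positivity)
          (h_near.integrableOn.add h_far) ?_
        filter_upwards [ae_restrict_mem measurableSet_Ioi] with u hu
        exact exp_mul_abs_sub_rpow_le hb.le hr₀ hδ (le_of_lt hu)
    _ = (∫ u in Ioi (0 : ℝ), near u) + δ ^ r * ∫ u in Ioi (0 : ℝ), exp (-b * u) := by
        rw [integral_add h_near.integrableOn h_far, integral_const_mul]
    _ ≤ (∫ u, near u) + δ ^ r * b⁻¹ := by
        rw [integral_exp_neg_mul_Ioi_zero hb]
        exact add_le_add_left (setIntegral_le_integral h_near (ae_of_all _ fun u =>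
          indicator_nonneg (fun v _ => rpow_nonneg (abs_nonneg _) _) u)) _
    _ = 2 * δ ^ (r + 1) / (r + 1) + δ ^ r * b⁻¹ := by
        rw [show ∫ u, near u = _ from integral_indicator_abs_sub_rpow hr₁ hδ.le x]

lemma integral_exp_mul_abs_sub_rpow_le {b r : ℝ} (hb : 0 < b) (hr₁ : -1 < r) (hr₀ : r ≤ 0)
    (x : ℝ) :
    ∫ u in Ioi (0 : ℝ), exp (-b * u) * |u - x| ^ r ≤ (2 / (r + 1) + 1) * b ^ (-(r + 1)) := by
  refine (integral_exp_mul_abs_sub_rpow_le_of_split hb hr₁ hr₀ (inv_pos.mpr hb) x).trans_eq ?_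
  rw [inv_rpow hb.le, inv_rpow hb.le, ← rpow_neg hb.le, ← rpow_neg hb.le, ← rpow_neg_one b,
    ← rpow_add hb, neg_add]
  ring

theorem exp_singular_integral_bound (c : ℝ) (hc : 0 < c) :
    ∃ C : ℝ, 0 < C ∧ ∀ t x : ℝ, 0 < t →
      (∫ u in Set.Ioi (0 : ℝ), Real.exp (-(c * u * t)) * |u - x| ^ (-(1 / 2) : ℝ)) ≤
        C * t ^ (-(1 / 2) : ℝ) := by
  refine ⟨5 * c ^ (-(1 / 2) : ℝ), by positivity, fun t x ht => ?_⟩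
  have h := integral_exp_mul_abs_sub_rpow_le (mul_pos hc ht) (r := -(1 / 2)) (by norm_num)
    (by norm_num) x
  norm_num only [mul_rpow hc.le ht.le] at h
  calc (∫ u in Ioi (0 : ℝ), exp (-(c * u * t)) * |u - x| ^ (-(1 / 2) : ℝ))
      = ∫ u in Ioi (0 : ℝ), exp (-(c * t) * u) * |u - x| ^ (-(1 / 2) : ℝ) := by
        simp only [neg_mul, mul_right_comm c]
    _ ≤ 5 * c ^ (-(1 / 2) : ℝ) * t ^ (-(1 / 2) : ℝ) := by rwa [mul_assoc]
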